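/- Let P, P' ⊆ ℝmaxⁿ be tropical polyhedra with mixed constraints defined respectively by the systems A x ⊕ c ≤𝔾 B x ⊕ d and A' x ⊕ c' ≤𝔾 B' x ⊕ d'. Let Q be the set of x ∈ ℝmaxⁿ for which there exist y, y' ∈ ℝmaxⁿ and λ, μ ∈ ℝmax satisfying: xᵢ = max(yᵢ, y'ᵢ) for all i; max(λ, μ) = 0; A y ⊕ λc ≤𝔾 B y ⊕ λd; A' y' ⊕ μc' ≤𝔾 B' y' ⊕ μd'; y₁ ⊕ ⋯ ⊕ yₙ ≤𝔾 (+∞) ⊗ λ; and y'₁ ⊕ ⋯ ⊕ y'ₙ ≤𝔾 (+∞) ⊗ μ. Then Q equals the tropical convex hull of P ∪ P'. -/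

import Mathlib

attribute [local instance] Classical.propDecidable

/-- The germ semiring `𝔾 = ℝmax ∪ {+∞} ∪ ℝ⁻`: `negInf` is `-∞`, `fin a` is the
real number `a` (an element of `ℝmax`), `germ a` is the germ `a̲ ∈ ℝ⁻`, and
`posInf` is `+∞`. -/
inductive TGerm where
  | negInf : TGerm
  | fin : ℝ → TGerm
  | germ : ℝ → TGerm
  | posInf : TGerm

namespace TGerm

/-- The modulus `|x| ∈ ℝmax ∪ {+∞} = EReal` of an element of `𝔾`. -/
noncomputable def modulus : TGerm → EReal
  | negInf => ⊥
  | fin a => (a : EReal)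
  | germ a => (a : EReal)
  | posInf => ⊤

/-- Whether `x` belongs to the copy `ℝ⁻` of perturbed reals. -/
def isPert : TGerm → Bool
  | germ _ => true
  | _ => false

/-- The total order `≤𝔾` on `𝔾`: `x ≤𝔾 y` iff `|x| < |y|` when
`x ∈ ℝmax ∪ {+∞}` and `y ∈ ℝ⁻`, and `|x| ≤ |y|` otherwise. -/
def gle (x y : TGerm) : Prop :=
  if isPert x = false ∧ isPert y = true then modulus x < modulus y
  else modulus x ≤ modulus y

/-- The valuation `x(ε) ∈ ℝmax ∪ {+∞} = EReal` of `x ∈ 𝔾` at `ε`. -/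
noncomputable def val : TGerm → ℝ → EReal
  | negInf, _ => ⊥
  | fin a, _ => (a : EReal)
  | germ a, ε => ((a - ε : ℝ) : EReal)
  | posInf, _ => ⊤

/-- The addition `⊕` of `𝔾`: the maximum with respect to `≤𝔾`. -/
noncomputable def add (x y : TGerm) : TGerm := if gle x y then y else x

/-- The minimum with respect to `≤𝔾`. -/
noncomputable def gmin (x y : TGerm) : TGerm := if gle x y then x else y

/-- The tropical sum `⊕ᵢ f i` of a finite family in `𝔾`. -/
noncomputable def gsum {n : ℕ} (f : Fin n → TGerm) : TGerm :=
  (List.ofFn f).foldr add negInf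

/-- The minimum (w.r.t. `≤𝔾`) of a finite family in `𝔾`. -/
noncomputable def ginf {n : ℕ} (f : Fin n → TGerm) : TGerm :=
  (List.ofFn f).foldr gmin posInf

/-- The multiplication `⊗` of `𝔾`. -/
def mul : TGerm → TGerm → TGerm
  | negInf, _ => negInf
  | _, negInf => negInf
  | posInf, _ => posInf
  | _, posInf => posInf
  | fin a, fin b => fin (a + b)
  | fin a, germ b => germ (a + b)
  | germ a, fin b => germ (a + b)
  | germ a, germ b => germ (a + b)

end TGerm

/-- The embedding of `ℝmax = ℝ ∪ {-∞}` into the germ semiring `𝔾`. -/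
def toGerm (x : WithBot ℝ) : TGerm := WithBot.recBotCoe TGerm.negInf TGerm.fin x

/-- The embedding of `ℝmax = ℝ ∪ {-∞}` into `ℝmax ∪ {+∞} = EReal`. -/
noncomputable def rmaxToEReal (x : WithBot ℝ) : EReal :=
  WithBot.recBotCoe ⊥ (fun a : ℝ => (a : EReal)) x

/-- The tropical convex hull of a subset `G ⊆ ℝmaxⁿ`: all vectors
`λ₁x¹ ⊕ ⋯ ⊕ λ_m x^m` with `x^k ∈ G`, `λ_k ∈ ℝmax` and `max(λ₁, …, λ_m) = 0`. -/
def tconv {n : ℕ} (G : Set (Fin n → WithBot ℝ)) : Set (Fin n → WithBot ℝ) :=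
  { z | ∃ m : ℕ, 0 < m ∧ ∃ (lam : Fin m → WithBot ℝ) (w : Fin m → Fin n → WithBot ℝ),
      (∀ k, w k ∈ G) ∧ Finset.univ.sup lam = 0 ∧
      ∀ i, z i = Finset.univ.sup fun k => lam k + w k i }

/-!
Homogenizing the system of `P` with a new variable `λ` gives the cone of pairs `(λ, y)` solving
`A y ⊕ λ c ≤𝔾 B y ⊕ λ d` with `y = -∞` whenever `λ = -∞`. For real `λ` its points are exactly
the `y = λ u` with `u ∈ P`, so `Q` consists of the combinations `λ u ⊕ μ v` with `u ∈ P`,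
`v ∈ P'` and `λ ⊕ μ = 0` (a part with coefficient `-∞` simply vanishes), whence
`Q ⊆ tconv (P ∪ P')`. Conversely, `⊗` is monotone and distributes over `⊕`, so the cone is closed
under tropical linear combinations; thus `Q` is tropically convex and contains `P ∪ P'`, hence
contains `tconv (P ∪ P')`.
-/

namespace TGerm

/-- `𝔾` is ordered lexicographically by modulus, then with the germ `a̲` below `a`. -/
noncomputable def key (x : TGerm) : Lex (EReal × Bool) := toLex (x.modulus, !x.isPert)

theorem key_injective : Function.Injective key := by
  intro x y h
  cases x <;> cases y <;> simp_all [key, modulus, isPert]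

noncomputable instance : LinearOrder TGerm := LinearOrder.lift' key key_injective

theorem le_iff_key_le {x y : TGerm} : x ≤ y ↔ key x ≤ key y := Iff.rfl

theorem gle_iff_le {x y : TGerm} : x.gle y ↔ x ≤ y := by
  rw [le_iff_key_le, key, key, Prod.Lex.le_iff, gle]
  rcases x.isPert <;> rcases y.isPert <;> simp [le_iff_lt_or_eq]

noncomputable instance : OrderBot TGerm where
  bot := negInf
  bot_le x := by
    rw [le_iff_key_le, key, key, Prod.Lex.le_iff]
    cases x <;> simp [modulus, isPert, bot_lt_iff_ne_bot]

noncomputable instance : OrderTop TGerm where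
  top := posInf
  le_top x := by
    rw [le_iff_key_le, key, key, Prod.Lex.le_iff]
    cases x <;> simp [modulus, isPert, lt_top_iff_ne_top]

theorem negInf_eq_bot : negInf = ⊥ := rfl

theorem posInf_eq_top : posInf = ⊤ := rfl

theorem add_eq_max (x y : TGerm) : add x y = max x y := by
  rw [add, max_def]
  simp only [gle_iff_le]
  split_ifs <;> rfl

theorem gsum_eq_sup {n : ℕ} (f : Fin n → TGerm) : gsum f = Finset.univ.sup f := by
  induction n with
  | zero => rfl
  | succ n ih =>
    rw [gsum, List.ofFn_succ, List.foldr_cons, ← gsum, ih, add_eq_max, Fin.univ_succ,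
      Finset.sup_cons, Finset.sup_map]
    rfl

theorem mul_bot (x : TGerm) : x.mul ⊥ = ⊥ := by cases x <;> rfl

theorem bot_mul (x : TGerm) : (⊥ : TGerm).mul x = ⊥ := rfl

protected theorem mul_comm (x y : TGerm) : x.mul y = y.mul x := by
  cases x <;> cases y <;> simp only [mul] <;> ring_nf

protected theorem mul_assoc (x y z : TGerm) : (x.mul y).mul z = x.mul (y.mul z) := by
  cases x <;> cases y <;> cases z <;> simp only [mul] <;> ring_nf

protected theorem mul_left_comm (x y z : TGerm) : x.mul (y.mul z) = y.mul (x.mul z) := by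
  rw [← TGerm.mul_assoc, TGerm.mul_comm x, TGerm.mul_assoc]

theorem fin_zero_mul (x : TGerm) : (fin 0).mul x = x := by
  cases x <;> simp [mul]

theorem mul_mono (x : TGerm) : Monotone x.mul := by
  intro s t h
  rw [← gle_iff_le] at h ⊢
  cases x <;> cases s <;> cases t <;>
    simp_all [mul, gle, isPert, modulus, -EReal.coe_add]
  linarith

theorem mul_add (x s t : TGerm) : x.mul (add s t) = add (x.mul s) (x.mul t) := by
  simp only [add_eq_max, (mul_mono x).map_max]

theorem add_mul (x s t : TGerm) : (add s t).mul x = add (s.mul x) (t.mul x) := by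
  simp only [TGerm.mul_comm _ x, mul_add]

theorem mul_gsum {n : ℕ} (x : TGerm) (f : Fin n → TGerm) :
    x.mul (gsum f) = gsum fun j => x.mul (f j) := by
  simp only [gsum_eq_sup]
  exact Finset.apply_sup_eq_sup_comp_of_linearOrder _ (mul_mono x) (mul_bot x)

end TGerm

theorem toGerm_bot : toGerm ⊥ = ⊥ := rfl

theorem toGerm_coe (a : ℝ) : toGerm a = TGerm.fin a := rfl

theorem toGerm_zero : toGerm 0 = TGerm.fin 0 := rfl

theorem toGerm_eq_bot {a : WithBot ℝ} : toGerm a = ⊥ ↔ a = ⊥ := by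
  cases a <;> simp [toGerm_bot, toGerm_coe, ← TGerm.negInf_eq_bot]

theorem toGerm_mono : Monotone toGerm := by
  intro a b h
  cases a with
  | bot => exact bot_le
  | coe a =>
    cases b with
    | bot => simp at h
    | coe b =>
      rw [toGerm_coe, toGerm_coe, ← TGerm.gle_iff_le]
      simpa [TGerm.gle, TGerm.isPert, TGerm.modulus] using h

theorem toGerm_max (a b : WithBot ℝ) : toGerm (max a b) = TGerm.add (toGerm a) (toGerm b) := by
  rw [TGerm.add_eq_max, toGerm_mono.map_max]

theorem toGerm_add (a b : WithBot ℝ) : toGerm (a + b) = (toGerm a).mul (toGerm b) := by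
  cases a <;> cases b <;> rfl

theorem gsum_gle_posInf_mul_iff {n : ℕ} {y : Fin n → WithBot ℝ} {lam : WithBot ℝ} :
    (TGerm.gsum fun i => toGerm (y i)).gle (TGerm.posInf.mul (toGerm lam)) ↔
      (lam = ⊥ → y = ⊥) := by
  rw [TGerm.gle_iff_le]
  cases lam with
  | bot =>
    simp [toGerm_bot, TGerm.mul_bot, TGerm.gsum_eq_sup, toGerm_eq_bot, funext_iff]
  | coe l => simp [toGerm_coe, TGerm.mul, TGerm.posInf_eq_top]

section MixedSystem

variable {n q : ℕ}

noncomputable def affineRow (F : Fin n → TGerm) (e : TGerm) (y : Fin n → WithBot ℝ) : TGerm :=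
  TGerm.add (TGerm.gsum fun j => (F j).mul (toGerm (y j))) e

theorem affineRow_const_add (F : Fin n → TGerm) (e : TGerm) (a : WithBot ℝ)
    (y : Fin n → WithBot ℝ) :
    affineRow F ((toGerm a).mul e) (fun j => a + y j) = (toGerm a).mul (affineRow F e y) := by
  simp only [affineRow, toGerm_add, TGerm.mul_add, TGerm.mul_gsum, TGerm.mul_left_comm (F _)]

theorem affineRow_max (F : Fin n → TGerm) (e₁ e₂ : TGerm) (y₁ y₂ : Fin n → WithBot ℝ) :
    affineRow F (TGerm.add e₁ e₂) (fun j => max (y₁ j) (y₂ j)) =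
      TGerm.add (affineRow F e₁ y₁) (affineRow F e₂ y₂) := by
  simp only [affineRow, toGerm_max, TGerm.add_eq_max, TGerm.gsum_eq_sup,
    (TGerm.mul_mono _).map_max]
  rw [← max_max_max_comm]
  congr 1
  exact Finset.sup_sup

/-- The tropical polyhedron `{x | A x ⊕ c ≤𝔾 B x ⊕ d}`. -/
def mixedPolyhedron (A : Fin q → Fin n → WithBot ℝ) (B : Fin q → Fin n → TGerm)
    (c : Fin q → WithBot ℝ) (d : Fin q → TGerm) : Set (Fin n → WithBot ℝ) :=
  { x | ∀ i, (affineRow (fun j => toGerm (A i j)) (toGerm (c i)) x).gle (affineRow (B i) (d i) x) }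

/-- `y` solves the homogenized system `A y ⊕ λ c ≤𝔾 B y ⊕ λ d`. -/
def IsHomogenizedSol (A : Fin q → Fin n → WithBot ℝ) (B : Fin q → Fin n → TGerm)
    (c : Fin q → WithBot ℝ) (d : Fin q → TGerm) (lam : WithBot ℝ) (y : Fin n → WithBot ℝ) :
    Prop :=
  ∀ i, (affineRow (fun j => toGerm (A i j)) ((toGerm lam).mul (toGerm (c i))) y).gle
    (affineRow (B i) ((toGerm lam).mul (d i)) y)

variable {A : Fin q → Fin n → WithBot ℝ} {B : Fin q → Fin n → TGerm}
  {c : Fin q → WithBot ℝ} {d : Fin q → TGerm}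

theorem IsHomogenizedSol.const_add {lam : WithBot ℝ} {y : Fin n → WithBot ℝ}
    (h : IsHomogenizedSol A B c d lam y) (a : WithBot ℝ) :
    IsHomogenizedSol A B c d (a + lam) (fun j => a + y j) := by
  intro i
  rw [TGerm.gle_iff_le, toGerm_add, TGerm.mul_assoc, TGerm.mul_assoc, affineRow_const_add,
    affineRow_const_add]
  exact TGerm.mul_mono _ (TGerm.gle_iff_le.mp (h i))

theorem IsHomogenizedSol.max {lam₁ lam₂ : WithBot ℝ} {y₁ y₂ : Fin n → WithBot ℝ}
    (h₁ : IsHomogenizedSol A B c d lam₁ y₁) (h₂ : IsHomogenizedSol A B c d lam₂ y₂) :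
    IsHomogenizedSol A B c d (max lam₁ lam₂) (fun j => max (y₁ j) (y₂ j)) := by
  intro i
  rw [TGerm.gle_iff_le, toGerm_max, TGerm.add_mul, TGerm.add_mul, affineRow_max, affineRow_max,
    TGerm.add_eq_max, TGerm.add_eq_max]
  exact max_le_max (TGerm.gle_iff_le.mp (h₁ i)) (TGerm.gle_iff_le.mp (h₂ i))

theorem isHomogenizedSol_zero_iff {x : Fin n → WithBot ℝ} :
    IsHomogenizedSol A B c d 0 x ↔ x ∈ mixedPolyhedron A B c d := by
  simp only [IsHomogenizedSol, toGerm_zero, TGerm.fin_zero_mul]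
  rfl

theorem isHomogenizedSol_bot : IsHomogenizedSol A B c d ⊥ ⊥ := by
  intro i
  simp [TGerm.gle_iff_le, affineRow, TGerm.add_eq_max, TGerm.gsum_eq_sup, toGerm_bot,
    TGerm.bot_mul, TGerm.mul_bot]

/-- A point `(λ, y)` of the cone over the polyhedron: the homogenized system holds, and
`y = -∞` when `λ = -∞` (the condition `⊕ᵢ yᵢ ≤𝔾 (+∞) ⊗ λ`). -/
def IsConeSol (A : Fin q → Fin n → WithBot ℝ) (B : Fin q → Fin n → TGerm)
    (c : Fin q → WithBot ℝ) (d : Fin q → TGerm) (lam : WithBot ℝ) (y : Fin n → WithBot ℝ) :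
    Prop :=
  IsHomogenizedSol A B c d lam y ∧ (lam = ⊥ → y = ⊥)

theorem IsConeSol.const_add {lam : WithBot ℝ} {y : Fin n → WithBot ℝ}
    (h : IsConeSol A B c d lam y) (a : WithBot ℝ) :
    IsConeSol A B c d (a + lam) (fun j => a + y j) := by
  refine ⟨h.1.const_add a, fun hbot => ?_⟩
  rcases WithBot.add_eq_bot.mp hbot with rfl | hlam
  · ext j
    exact WithBot.bot_add _
  · ext j
    rw [h.2 hlam, Pi.bot_apply, WithBot.add_bot]

theorem IsConeSol.max {lam₁ lam₂ : WithBot ℝ} {y₁ y₂ : Fin n → WithBot ℝ}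
    (h₁ : IsConeSol A B c d lam₁ y₁) (h₂ : IsConeSol A B c d lam₂ y₂) :
    IsConeSol A B c d (max lam₁ lam₂) (fun j => max (y₁ j) (y₂ j)) := by
  refine ⟨h₁.1.max h₂.1, fun hbot => ?_⟩
  obtain ⟨hlam₁, hlam₂⟩ := max_eq_bot.mp hbot
  ext j
  simp [h₁.2 hlam₁, h₂.2 hlam₂]

theorem isConeSol_bot : IsConeSol A B c d ⊥ ⊥ := ⟨isHomogenizedSol_bot, fun _ => rfl⟩

theorem isConeSol_coe_add_iff {l : ℝ} {x : Fin n → WithBot ℝ} :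
    IsConeSol A B c d l (fun j => l + x j) ↔ x ∈ mixedPolyhedron A B c d := by
  rw [← isHomogenizedSol_zero_iff]
  refine ⟨fun h => ?_, fun h => ⟨?_, fun h => absurd h WithBot.coe_ne_bot⟩⟩
  · simpa [← add_assoc, ← WithBot.coe_add] using h.1.const_add ((-l : ℝ) : WithBot ℝ)
  · simpa using h.const_add (l : WithBot ℝ)

theorem isConeSol_zero_iff {x : Fin n → WithBot ℝ} :
    IsConeSol A B c d 0 x ↔ x ∈ mixedPolyhedron A B c d := by
  simpa using isConeSol_coe_add_iff (l := 0)

theorem IsConeSol.eq_bot_or_exists_mem {lam : WithBot ℝ} {y : Fin n → WithBot ℝ}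
    (h : IsConeSol A B c d lam y) :
    lam = ⊥ ∧ y = ⊥ ∨ ∃ u ∈ mixedPolyhedron A B c d, y = fun j => lam + u j := by
  cases lam with
  | bot => exact Or.inl ⟨rfl, h.2 rfl⟩
  | coe l =>
    have hy : y = fun j => l + (((-l : ℝ) : WithBot ℝ) + y j) := by
      ext j
      simp [← add_assoc, ← WithBot.coe_add]
    exact Or.inr ⟨_, isConeSol_coe_add_iff.mp (hy ▸ h), hy⟩

end MixedSystem

theorem WithBot.add_finset_sup {α ι : Type*} [LinearOrder α] [Add α] [AddLeftMono α]
    (a : WithBot α) (s : Finset ι) (f : ι → WithBot α) :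
    a + s.sup f = s.sup fun k => a + f k :=
  Finset.apply_sup_eq_sup_comp_of_linearOrder (a + ·) (fun _ _ h => add_le_add_right h a)
    (WithBot.add_bot a)

section TropicalConvexity

variable {n : ℕ}

def IsTropConvex (S : Set (Fin n → WithBot ℝ)) : Prop :=
  ∀ u ∈ S, ∀ v ∈ S, ∀ a b : WithBot ℝ, max a b = 0 → (fun i => max (a + u i) (b + v i)) ∈ S

theorem IsTropConvex.finset_sup_mem {S : Set (Fin n → WithBot ℝ)} (hS : IsTropConvex S)
    {ι : Type*} {s : Finset ι} (hs : s.Nonempty) {lam : ι → WithBot ℝ}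
    {w : ι → Fin n → WithBot ℝ} (hw : ∀ k ∈ s, w k ∈ S) (hlam : s.sup lam = 0) :
    (fun i => s.sup fun k => lam k + w k i) ∈ S := by
  induction hs using Finset.Nonempty.cons_induction generalizing lam with
  | singleton k =>
    rw [Finset.sup_singleton] at hlam
    simpa [hlam] using hw k (Finset.mem_singleton_self k)
  | cons k s hk hs ih =>
    rw [Finset.sup_cons] at hlam
    simp only [Finset.sup_cons]
    have hwk := hw k (Finset.mem_cons_self k s)
    have hws : ∀ k' ∈ s, w k' ∈ S := fun k' hk' => hw k' (Finset.mem_cons_of_mem hk')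
    cases hβ : s.sup lam with
    | bot =>
      have hbot : ∀ i, (s.sup fun k' => lam k' + w k' i) = ⊥ := fun i =>
        (Finset.sup_eq_bot_iff _ _).mpr fun k' hk' => by
          rw [(Finset.sup_eq_bot_iff _ _).mp hβ k' hk', WithBot.bot_add]
      rw [hβ, max_bot_right] at hlam
      simpa [hbot, hlam] using hwk
    | coe α =>
      -- rescale the remaining coefficients so that their maximum is `0`
      have hz := ih (lam := fun k' => ((-α : ℝ) : WithBot ℝ) + lam k') hws
        (by rw [← WithBot.add_finset_sup, hβ, ← WithBot.coe_add, neg_add_cancel, WithBot.coe_zero])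
      convert hS _ hwk _ hz (lam k) α (hβ ▸ hlam) using 2 with i
      rw [WithBot.add_finset_sup]
      simp [← add_assoc, ← WithBot.coe_add]

theorem IsTropConvex.tconv_subset {G S : Set (Fin n → WithBot ℝ)} (hS : IsTropConvex S)
    (hG : G ⊆ S) : tconv G ⊆ S := by
  rintro z ⟨m, hm, lam, w, hw, hlam, hz⟩
  obtain rfl : z = fun i => Finset.univ.sup fun k => lam k + w k i := funext hz
  exact hS.finset_sup_mem (Finset.univ_nonempty_iff.mpr ⟨⟨0, hm⟩⟩) (fun k _ => hG (hw k)) hlam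

theorem max_add_mem_tconv {G : Set (Fin n → WithBot ℝ)} {u v : Fin n → WithBot ℝ} (hu : u ∈ G)
    (hv : v ∈ G) {a b : WithBot ℝ} (hab : max a b = 0) :
    (fun i => max (a + u i) (b + v i)) ∈ tconv G := by
  refine ⟨2, two_pos, ![a, b], ![u, v], fun k => ?_, ?_, fun i => ?_⟩
  · fin_cases k <;> assumption
  · simpa [Fin.univ_succ] using hab
  · simp [Fin.univ_succ]

end TropicalConvexity

section JoinHull

variable {n p p' : ℕ} (A : Fin p → Fin n → WithBot ℝ) (B : Fin p → Fin n → TGerm)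
  (c : Fin p → WithBot ℝ) (d : Fin p → TGerm) (A' : Fin p' → Fin n → WithBot ℝ)
  (B' : Fin p' → Fin n → TGerm) (c' : Fin p' → WithBot ℝ) (d' : Fin p' → TGerm)

def joinHull : Set (Fin n → WithBot ℝ) :=
  { x | ∃ (y y' : Fin n → WithBot ℝ) (lam mu : WithBot ℝ),
      (∀ i, x i = max (y i) (y' i)) ∧ max lam mu = 0 ∧
      IsHomogenizedSol A B c d lam y ∧ IsHomogenizedSol A' B' c' d' mu y' ∧
      (TGerm.gsum fun i => toGerm (y i)).gle (TGerm.posInf.mul (toGerm lam)) ∧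
      (TGerm.gsum fun i => toGerm (y' i)).gle (TGerm.posInf.mul (toGerm mu)) }

variable {A B c d A' B' c' d'}

theorem mem_joinHull_iff {x : Fin n → WithBot ℝ} :
    x ∈ joinHull A B c d A' B' c' d' ↔
      ∃ (y y' : Fin n → WithBot ℝ) (lam mu : WithBot ℝ),
        (∀ i, x i = max (y i) (y' i)) ∧ max lam mu = 0 ∧
        IsConeSol A B c d lam y ∧ IsConeSol A' B' c' d' mu y' := by
  simp only [joinHull, Set.mem_ofPred_eq, IsConeSol, gsum_gle_posInf_mul_iff]
  exact ⟨fun ⟨y, y', lam, mu, hx, hmax, h, h', hb, hb'⟩ =>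
      ⟨y, y', lam, mu, hx, hmax, ⟨h, hb⟩, h', hb'⟩,
    fun ⟨y, y', lam, mu, hx, hmax, ⟨h, hb⟩, h', hb'⟩ =>
      ⟨y, y', lam, mu, hx, hmax, h, h', hb, hb'⟩⟩

theorem union_subset_joinHull :
    mixedPolyhedron A B c d ∪ mixedPolyhedron A' B' c' d' ⊆ joinHull A B c d A' B' c' d' := by
  rintro x (hx | hx) <;> refine mem_joinHull_iff.mpr ?_
  · exact ⟨x, ⊥, 0, ⊥, fun i => (max_bot_right _).symm, max_bot_right _,
      isConeSol_zero_iff.mpr hx, isConeSol_bot⟩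
  · exact ⟨⊥, x, ⊥, 0, fun i => (max_bot_left _).symm, max_bot_left _,
      isConeSol_bot, isConeSol_zero_iff.mpr hx⟩

theorem isTropConvex_joinHull : IsTropConvex (joinHull A B c d A' B' c' d') := by
  intro x₁ hx₁ x₂ hx₂ a b hab
  obtain ⟨y₁, y₁', l₁, m₁, hx₁, hlm₁, h₁, h₁'⟩ := mem_joinHull_iff.mp hx₁
  obtain ⟨y₂, y₂', l₂, m₂, hx₂, hlm₂, h₂, h₂'⟩ := mem_joinHull_iff.mp hx₂
  refine mem_joinHull_iff.mpr ⟨_, _, _, _, fun i => ?_, ?_,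
    (h₁.const_add a).max (h₂.const_add b), (h₁'.const_add a).max (h₂'.const_add b)⟩
  · rw [hx₁ i, hx₂ i, ← max_add_add_left, ← max_add_add_left, max_max_max_comm]
  · rw [max_max_max_comm, max_add_add_left, max_add_add_left, hlm₁, hlm₂, add_zero, add_zero,
      hab]

theorem joinHull_subset_tconv :
    joinHull A B c d A' B' c' d' ⊆
      tconv (mixedPolyhedron A B c d ∪ mixedPolyhedron A' B' c' d') := by
  intro x hxQ
  obtain ⟨y, y', lam, mu, hx, hlm, h, h'⟩ := mem_joinHull_iff.mp hxQ
  -- a vanishing part is absorbed by writing the other point as `max (⊥ + v) (μ + v)`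
  rcases h.eq_bot_or_exists_mem with ⟨rfl, rfl⟩ | ⟨u, hu, rfl⟩ <;>
    rcases h'.eq_bot_or_exists_mem with ⟨rfl, rfl⟩ | ⟨v, hv, rfl⟩
  · simp at hlm
  · convert max_add_mem_tconv (Or.inr hv : v ∈ _ ∪ _) (Or.inr hv) hlm using 2 with i
    simp [hx i]
  · convert max_add_mem_tconv (Or.inl hu : u ∈ _ ∪ _) (Or.inl hu) hlm using 2 with i
    simp [hx i]
  · exact funext hx ▸ max_add_mem_tconv (Or.inl hu) (Or.inr hv) hlm

end JoinHull

theorem statement_10 (n p p' : ℕ)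
    (A : Fin p → Fin n → WithBot ℝ) (B : Fin p → Fin n → TGerm)
    (c : Fin p → WithBot ℝ) (d : Fin p → TGerm)
    (A' : Fin p' → Fin n → WithBot ℝ) (B' : Fin p' → Fin n → TGerm)
    (c' : Fin p' → WithBot ℝ) (d' : Fin p' → TGerm) :
    { x : Fin n → WithBot ℝ |
      ∃ (y y' : Fin n → WithBot ℝ) (lam mu : WithBot ℝ),
        (∀ i, x i = max (y i) (y' i)) ∧ max lam mu = 0 ∧
        (∀ i, (TGerm.add (TGerm.gsum fun j => (toGerm (A i j)).mul (toGerm (y j)))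
                 ((toGerm lam).mul (toGerm (c i)))).gle
               (TGerm.add (TGerm.gsum fun j => (B i j).mul (toGerm (y j)))
                 ((toGerm lam).mul (d i)))) ∧
        (∀ i, (TGerm.add (TGerm.gsum fun j => (toGerm (A' i j)).mul (toGerm (y' j)))
                 ((toGerm mu).mul (toGerm (c' i)))).gle
               (TGerm.add (TGerm.gsum fun j => (B' i j).mul (toGerm (y' j)))
                 ((toGerm mu).mul (d' i)))) ∧
        (TGerm.gsum fun i => toGerm (y i)).gle (TGerm.posInf.mul (toGerm lam)) ∧
        (TGerm.gsum fun i => toGerm (y' i)).gle (TGerm.posInf.mul (toGerm mu)) }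
    = tconv
        ({ x | ∀ i, (TGerm.add (TGerm.gsum fun j => (toGerm (A i j)).mul (toGerm (x j)))
                       (toGerm (c i))).gle
                     (TGerm.add (TGerm.gsum fun j => (B i j).mul (toGerm (x j))) (d i)) } ∪
         { x | ∀ i, (TGerm.add (TGerm.gsum fun j => (toGerm (A' i j)).mul (toGerm (x j)))
                       (toGerm (c' i))).gle
                     (TGerm.add (TGerm.gsum fun j => (B' i j).mul (toGerm (x j))) (d' i)) }) := by
  change joinHull A B c d A' B' c' d' =
    tconv (mixedPolyhedron A B c d ∪ mixedPolyhedron A' B' c' d')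
  exact joinHull_subset_tconv.antisymm
    (isTropConvex_joinHull.tconv_subset union_subset_joinHull)
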